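/- For all m ≥ 1 and n ≥ 2, no m-state realtime deterministic pushdown automaton with at most n−1 pushdown symbols accepts the language L_{m,n} = { b^k a | 1 ≤ k ≤ mn−1 }. -/
import Mathlib


/-- The binary input alphabet `{a, b}`. -/
inductive Bin : Type
  | a : Bin
  | b : Bin
deriving DecidableEq

/-- The language `L_n = { b^k a | 1 ≤ k ≤ n-1 }` over `{a, b}`. -/
def Ln (n : ℕ) : Set (List Bin) :=
  {w | ∃ k, 1 ≤ k ∧ k ≤ n - 1 ∧ w = List.replicate k Bin.b ++ [Bin.a]}

/-- The language `L_{m,n} = { b^k a | 1 ≤ k ≤ mn-1 }` over `{a, b}`. -/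
def Lmn (m n : ℕ) : Set (List Bin) :=
  {w | ∃ k, 1 ≤ k ∧ k ≤ m * n - 1 ∧ w = List.replicate k Bin.b ++ [Bin.a]}

/-- A realtime deterministic pushdown automaton (no ε-moves) over input
alphabet `A`: state set `Q`, pushdown alphabet `Γ`, partial transition
function `δ`, initial state `q0`, initial pushdown symbol `Z0`, and accepting
states `F`. -/
structure RPDA (A : Type) where
  Q : Type
  [instQ : Fintype Q]
  Γ : Type
  [instΓ : Fintype Γ]
  δ : Q → Γ → A → Option (Q × List Γ)
  q0 : Q
  Z0 : Γ
  F : Set Q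

attribute [instance] RPDA.instQ RPDA.instΓ

/-- `M.Steps c w c'` : from configuration `c` (state and pushdown content,
top of the pushdown being the head of the list) the automaton reads the input
string `w` and reaches configuration `c'`. -/
inductive RPDA.Steps {A : Type} (M : RPDA A) :
    M.Q × List M.Γ → List A → M.Q × List M.Γ → Prop
  | refl (c : M.Q × List M.Γ) : RPDA.Steps M c [] c
  | step {q : M.Q} {X : M.Γ} {γ : List M.Γ} {a : A} {p : M.Q} {w : List M.Γ}
      {ws : List A} {c : M.Q × List M.Γ} :
      M.δ q X a = some (p, w) → RPDA.Steps M (p, w ++ γ) ws c →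
      RPDA.Steps M (q, X :: γ) (a :: ws) c

/-- Acceptance by final state and empty pushdown. -/
def RPDA.Accepts {A : Type} (M : RPDA A) (w : List A) : Prop :=
  ∃ f ∈ M.F, M.Steps (M.q0, [M.Z0]) w (f, [])


section
variable {A : Type} {M : RPDA A}

theorem steps_nil {c c' : M.Q × List M.Γ} (h : M.Steps c [] c') : c = c' := by
  cases h; rfl

theorem steps_det : ∀ {c : M.Q × List M.Γ} {w c1 c2},
    M.Steps c w c1 → M.Steps c w c2 → c1 = c2 := by
  intro c w c1 c2 h1 h2
  induction h1 generalizing c2 with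
  | refl c => cases h2; rfl
  | step hd _ ih =>
    cases h2 with
    | step hd2 hrest2 =>
      rw [hd] at hd2
      injection hd2 with h
      injection h with h1 h2
      subst h1; subst h2
      exact ih hrest2

theorem steps_trans : ∀ {c c1 c2 : M.Q × List M.Γ} {u v},
    M.Steps c u c1 → M.Steps c1 v c2 → M.Steps c (u ++ v) c2 := by
  intro c c1 c2 u v h1 h2
  induction h1 with
  | refl => exact h2
  | step hd _ ih => exact RPDA.Steps.step hd (ih h2)

theorem steps_split : ∀ {c c2 : M.Q × List M.Γ} (u : List A) {v},
    M.Steps c (u ++ v) c2 → ∃ c1, M.Steps c u c1 ∧ M.Steps c1 v c2 := by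
  intro c c2 u
  induction u generalizing c with
  | nil => exact fun h => ⟨c, RPDA.Steps.refl c, h⟩
  | cons a u ih =>
    intro v h
    cases h with
    | step hd hrest =>
      obtain ⟨c1, h1, h2⟩ := ih hrest
      exact ⟨c1, RPDA.Steps.step hd h1, h2⟩

theorem step_a_empty {q : M.Q} {γ f} {a : A}
    (h : M.Steps (q, γ) [a] (f, [])) :
    ∃ X, γ = [X] ∧ M.δ q X a = some (f, []) := by
  cases h with
  | step hd hrest =>
    have := steps_nil hrest
    rename_i X γ' p w
    injection this with h1 h2
    subst h1
    rw [List.append_eq_nil_iff] at h2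
    obtain ⟨rfl, rfl⟩ := h2
    exact ⟨X, rfl, hd⟩
end
/-- For all `m ≥ 1` and `n ≥ 2`, no `m`-state realtime
deterministic pushdown automaton with at most `n - 1` pushdown symbols accepts
`L_{m,n} = { b^k a | 1 ≤ k ≤ mn-1 }`. -/
theorem no_small_rpda_for_Lmn (m n : ℕ) (hm : 1 ≤ m) (hn : 2 ≤ n)
    (M : RPDA Bin) (hQ : Fintype.card M.Q = m)
    (hΓ : Fintype.card M.Γ ≤ n - 1) :
    ¬ (∀ w : List Bin, M.Accepts w ↔ w ∈ Lmn m n) := by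
  intro h
  have hmn : 2 ≤ m * n := le_trans hn (Nat.le_mul_of_pos_left n hm)
  have hacc : ∀ k, 1 ≤ k → k ≤ m * n - 1 →
      ∃ q X f, f ∈ M.F ∧
        M.Steps (M.q0, [M.Z0]) (List.replicate k Bin.b) (q, [X]) ∧
        M.δ q X Bin.a = some (f, []) := by
    intro k hk1 hk2
    obtain ⟨f, hf, hsteps⟩ : M.Accepts (List.replicate k Bin.b ++ [Bin.a]) :=
      (h _).mpr ⟨k, hk1, hk2, rfl⟩
    obtain ⟨c1, h1, h2⟩ := steps_split _ hsteps
    obtain ⟨q, γ⟩ := c1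
    obtain ⟨X, rfl, hδ⟩ := step_a_empty h2
    exact ⟨q, X, f, hf, h1, hδ⟩
  have key : ∀ k : ℕ, k ≤ m * n - 1 →
      ∃ p : M.Q × M.Γ,
        M.Steps (M.q0, [M.Z0]) (List.replicate k Bin.b) (p.1, [p.2]) := by
    intro k hk
    rcases Nat.eq_zero_or_pos k with rfl | hk1
    · exact ⟨(M.q0, M.Z0), RPDA.Steps.refl _⟩
    · obtain ⟨q, X, f, _, hst, _⟩ := hacc k hk1 hk
      exact ⟨(q, X), hst⟩
  let g : Fin (m * n) → M.Q × M.Γ :=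
    fun k => (key k (by have := k.isLt; omega)).choose
  have hg : ∀ k : Fin (m * n),
      M.Steps (M.q0, [M.Z0]) (List.replicate k Bin.b) ((g k).1, [(g k).2]) :=
    fun k => (key k (by have := k.isLt; omega)).choose_spec
  have main : ∀ i j : Fin (m * n), (i : ℕ) < j → g i = g j → False := by
    intro i j hij heq
    set s := m * n - 1 - (i : ℕ) with hs
    obtain ⟨q', X', f, hf, hst, hδ⟩ := hacc (m * n - 1) (by omega) le_rfl
    have hieq : m * n - 1 = (i : ℕ) + s := by have := i.isLt; have := j.isLt; omega
    rw [hieq, List.replicate_add] at hst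
    obtain ⟨c1, h1, h2⟩ := steps_split _ hst
    have hc1 : c1 = ((g i).1, [(g i).2]) := steps_det h1 (hg i)
    rw [hc1, heq] at h2
    have hstepa : M.Steps (q', [X']) [Bin.a] (f, []) :=
      RPDA.Steps.step hδ (RPDA.Steps.refl _)
    have hsteps : M.Steps (M.q0, [M.Z0])
        ((List.replicate (j : ℕ) Bin.b ++ List.replicate s Bin.b) ++ [Bin.a]) (f, []) :=
      steps_trans (steps_trans (hg j) h2) hstepa
    rw [← List.replicate_add] at hsteps
    obtain ⟨k, hk1, hk2, hw⟩ := (h _).mp ⟨f, hf, hsteps⟩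
    have hlen := congrArg List.length hw
    simp at hlen
    have := j.isLt
    omega
  have hcard : Fintype.card (M.Q × M.Γ) < Fintype.card (Fin (m * n)) := by
    rw [Fintype.card_prod, hQ, Fintype.card_fin]
    calc m * Fintype.card M.Γ ≤ m * (n - 1) := Nat.mul_le_mul_left _ hΓ
      _ < m * n := by
          have h1 : n - 1 < n := by omega
          exact Nat.mul_lt_mul_of_le_of_lt le_rfl h1 (by omega)
  obtain ⟨i, j, hne, heq⟩ := Fintype.exists_ne_map_eq_of_card_lt g hcard
  rcases lt_or_gt_of_ne (Fin.val_ne_of_ne hne) with hlt | hgt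
  · exact main i j hlt heq
  · exact main j i hgt heq.symm
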